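/- arXiv:1808.03258 — 2 statements merged into one kernel-verified Lean document; each statement's English description precedes it below -/
import Mathlib

section
/- Let N be divisible by 2, h > 0, ξ₁,...,ξ_N independent with E[ξᵢ]=0 and E[ξᵢ²] = 2σ²/(Nh), u deterministic, u0 = u+ξ. Define v¹(i) = (u0(2i-1)+u0(2i))/2, u¹(i) = (u(2i-1)+u(2i))/2 for i=1,...,N/2, and V₂ = (1/(2h)) Σ_{i=1}^{N/2-1} (v¹(i+1)-v¹(i))². Then E[V₂] = (1/2 - 1/N)(σ²/h²) + (1/(2h)) Σ_{i=1}^{N/2-1} (u¹(i+1)-u¹(i))². -/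
/-!
Averaging consecutive pairs turns the noise `ξ` into independent noise `η i = (ξ (2i) + ξ (2i+1))/2`
of half the variance, so the coarsened increment `v¹ (i+1) - v¹ i` is the deterministic increment
`u¹ (i+1) - u¹ i` plus the difference `η (i+1) - η i` of two independent centred variables. Its
second moment is therefore `(u¹ (i+1) - u¹ i)² + 2σ²/(Nh)`, and summing the `N/2 - 1` terms gives
the formula.
-/

open Finset MeasureTheory ProbabilityTheory

namespace ProbabilityTheory

variable {Ω : Type*} [MeasurableSpace Ω] {μ : Measure Ω}

lemma IndepFun.integral_sq_const_add_sub [IsProbabilityMeasure μ] {X Y : Ω → ℝ}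
    (hXY : X ⟂ᵢ[μ] Y) (hX : MemLp X 2 μ) (hY : MemLp Y 2 μ) (c : ℝ) :
    ∫ ω, (c + (X ω - Y ω)) ^ 2 ∂μ = (c + μ[X] - μ[Y]) ^ 2 + Var[X; μ] + Var[Y; μ] := by
  have hZ : MemLp (fun ω ↦ c + (X ω - Y ω)) 2 μ := (memLp_const c).add (hX.sub hY)
  have hvar : Var[fun ω ↦ c + (X ω - Y ω); μ] = Var[X; μ] + Var[Y; μ] := by
    rw [variance_const_add (X := fun ω ↦ X ω - Y ω) (hX.sub hY).aestronglyMeasurable,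
      variance_fun_sub hX hY, hXY.covariance_eq_zero hX hY]
    ring
  have hmean : μ[fun ω ↦ c + (X ω - Y ω)] = c + μ[X] - μ[Y] := by
    rw [integral_add (f := fun _ ↦ c) (g := fun ω ↦ X ω - Y ω) (integrable_const c)
        ((hX.integrable one_le_two).sub (hY.integrable one_le_two)),
      integral_sub (hX.integrable one_le_two) (hY.integrable one_le_two), integral_const]
    simp only [probReal_univ, smul_eq_mul, one_mul]
    ring
  have hsecond := variance_eq_sub hZ
  simp only [Pi.pow_apply] at hsecond
  rw [← hmean]
  linarith

noncomputable def coarsen (ξ : ℕ → Ω → ℝ) (i : ℕ) : Ω → ℝ :=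
  fun ω ↦ (ξ (2 * i) ω + ξ (2 * i + 1) ω) / 2

variable {ξ : ℕ → Ω → ℝ}

lemma memLp_coarsen (hξ : ∀ i, MemLp (ξ i) 2 μ) (i : ℕ) : MemLp (coarsen ξ i) 2 μ := by
  unfold coarsen
  simpa only [div_eq_mul_inv, Pi.add_apply] using
    ((hξ (2 * i)).add (hξ (2 * i + 1))).mul_const 2⁻¹

lemma integral_coarsen (hξ : ∀ i, Integrable (ξ i) μ) (i : ℕ) :
    μ[coarsen ξ i] = (μ[ξ (2 * i)] + μ[ξ (2 * i + 1)]) / 2 := by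
  unfold coarsen
  rw [integral_div, integral_add (hξ _) (hξ _)]

lemma iIndepFun.indepFun_coarsen (hind : iIndepFun ξ μ) (hξ : ∀ i, AEMeasurable (ξ i) μ)
    {i j : ℕ} (hij : i ≠ j) : coarsen ξ i ⟂ᵢ[μ] coarsen ξ j := by
  have hpairs := hind.indepFun_prodMk_prodMk₀ hξ (2 * i) (2 * i + 1) (2 * j) (2 * j + 1)
    (by omega) (by omega) (by omega) (by omega)
  have havg : Measurable fun p : ℝ × ℝ ↦ (p.1 + p.2) / 2 := by fun_prop
  exact hpairs.comp havg havg

lemma iIndepFun.variance_coarsen (hind : iIndepFun ξ μ) (hξ : ∀ i, MemLp (ξ i) 2 μ) (i : ℕ) :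
    Var[coarsen ξ i; μ] = (Var[ξ (2 * i); μ] + Var[ξ (2 * i + 1); μ]) / 4 := by
  have hsum : Var[fun ω ↦ ξ (2 * i) ω + ξ (2 * i + 1) ω; μ]
      = Var[ξ (2 * i); μ] + Var[ξ (2 * i + 1); μ] :=
    (hind.indepFun (by omega)).variance_fun_add (hξ _) (hξ _)
  unfold coarsen
  simp_rw [div_eq_mul_inv]
  rw [variance_mul_const 2⁻¹ (fun ω ↦ ξ (2 * i) ω + ξ (2 * i + 1) ω), hsum]
  ring

lemma iIndepFun.integral_sq_const_add_coarsen_sub [IsProbabilityMeasure μ] {v : ℝ}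
    (hind : iIndepFun ξ μ) (hξ : ∀ i, MemLp (ξ i) 2 μ) (hmean : ∀ i, μ[ξ i] = 0)
    (hvar : ∀ i, Var[ξ i; μ] = v) (c : ℝ) (i : ℕ) :
    ∫ ω, (c + (coarsen ξ (i + 1) ω - coarsen ξ i ω)) ^ 2 ∂μ = c ^ 2 + v := by
  have hmean' : ∀ j, μ[coarsen ξ j] = 0 := fun j ↦ by
    rw [integral_coarsen (fun k ↦ (hξ k).integrable one_le_two), hmean, hmean, add_zero, zero_div]
  rw [(hind.indepFun_coarsen (fun j ↦ (hξ j).aemeasurable) (by omega)).integral_sq_const_add_sub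
    (memLp_coarsen hξ _) (memLp_coarsen hξ _), hind.variance_coarsen hξ, hind.variance_coarsen hξ,
    hmean', hmean', hvar, hvar, hvar, hvar]
  ring

end ProbabilityTheory

/-- Here `N = 2*M`, and indices are 0-based, so `u¹ i = (u (2i) + u (2i+1))/2`. -/
theorem expected_V2_general (M : ℕ) (hM : 1 ≤ M) (h σ : ℝ)
    {Ω : Type*} [MeasureSpace Ω] [IsProbabilityMeasure (ℙ : Measure Ω)]
    (ξ : ℕ → Ω → ℝ)
    (hindep : iIndepFun ξ ℙ)
    (hL2 : ∀ i, MemLp (ξ i) 2 ℙ)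
    (hmean : ∀ i, ∫ ω, ξ i ω = 0)
    (hvar : ∀ i, ∫ ω, (ξ i ω)^2 = 2*σ^2/((2*M : ℕ)*h))
    (u : ℕ → ℝ) (u0 : ℕ → Ω → ℝ)
    (hu0 : ∀ i ω, u0 i ω = u i + ξ i ω)
    (u₁ : ℕ → ℝ) (v₁ : ℕ → Ω → ℝ)
    (hu1 : ∀ i, u₁ i = (u (2*i) + u (2*i+1))/2)
    (hv1 : ∀ i ω, v₁ i ω = (u0 (2*i) ω + u0 (2*i+1) ω)/2)
    (V₂ : Ω → ℝ)
    (hV2 : ∀ ω, V₂ ω = (1/(2*h)) * ∑ i ∈ range (M-1), (v₁ (i+1) ω - v₁ i ω)^2) :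
    ∫ ω, V₂ ω
      = (1/2 - 1/(2*M : ℕ)) * (σ^2/h^2)
        + (1/(2*h)) * ∑ i ∈ range (M-1), (u₁ (i+1) - u₁ i)^2 := by
  have hincr : ∀ i ω, v₁ (i + 1) ω - v₁ i ω
      = (u₁ (i + 1) - u₁ i) + (coarsen ξ (i + 1) ω - coarsen ξ i ω) := fun i ω ↦ by
    simp only [coarsen, hv1, hu0, hu1, mul_add]
    ring
  have hvarξ : ∀ i, Var[ξ i] = 2 * σ ^ 2 / ((2 * M : ℕ) * h) := fun i ↦ by
    rw [variance_of_integral_eq_zero (hL2 i).aemeasurable (hmean i), hvar]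
  have hintegrable : ∀ i, Integrable (fun ω ↦ (v₁ (i + 1) ω - v₁ i ω) ^ 2) := fun i ↦ by
    simp only [hincr]
    exact ((memLp_const (u₁ (i + 1) - u₁ i)).add
      ((memLp_coarsen hL2 (i + 1)).sub (memLp_coarsen hL2 i))).integrable_sq
  simp only [hV2]
  rw [integral_const_mul, integral_finsetSum _ fun i _ ↦ hintegrable i]
  simp only [hincr, hindep.integral_sq_const_add_coarsen_sub hL2 hmean hvarξ, sum_add_distrib,
    sum_const, card_range, nsmul_eq_mul]
  rw [mul_add, add_comm]
  congr 1
  rw [Nat.cast_sub hM]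
  push_cast
  field_simp

/-- Expectation of the once-coarsened variation `V₂`. Here `N = 2*M`,
indices are 0-based so `u¹ i = (u (2i) + u (2i+1))/2`. -/
theorem expected_V2 (M : ℕ) (hM : 1 ≤ M) (h σ : ℝ) (hh : 0 < h)
    {Ω : Type*} [MeasureSpace Ω] [IsProbabilityMeasure (ℙ : Measure Ω)]
    (ξ : ℕ → Ω → ℝ)
    (hindep : iIndepFun ξ ℙ)
    (hL2 : ∀ i, MemLp (ξ i) 2 ℙ)
    (hmean : ∀ i, ∫ ω, ξ i ω = 0)
    (hvar : ∀ i, ∫ ω, (ξ i ω)^2 = 2*σ^2/((2*M : ℕ)*h))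
    (u : ℕ → ℝ) (u0 : ℕ → Ω → ℝ)
    (hu0 : ∀ i ω, u0 i ω = u i + ξ i ω)
    (u₁ : ℕ → ℝ) (v₁ : ℕ → Ω → ℝ)
    (hu1 : ∀ i, u₁ i = (u (2*i) + u (2*i+1))/2)
    (hv1 : ∀ i ω, v₁ i ω = (u0 (2*i) ω + u0 (2*i+1) ω)/2)
    (V₂ : Ω → ℝ)
    (hV2 : ∀ ω, V₂ ω = (1/(2*h)) * ∑ i ∈ range (M-1), (v₁ (i+1) ω - v₁ i ω)^2) :
    ∫ ω, V₂ ω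
      = (1/2 - 1/(2*M : ℕ)) * (σ^2/h^2)
        + (1/(2*h)) * ∑ i ∈ range (M-1), (u₁ (i+1) - u₁ i)^2 :=
  expected_V2_general M hM h σ ξ hindep hL2 hmean hvar u u0 hu0 u₁ v₁ hu1 hv1 V₂ hV2
end

section
/- Let N be divisible by 4, h > 0, ξ₁,...,ξ_N independent with E[ξᵢ]=0 and E[ξᵢ²]=2σ²/(Nh), u deterministic, u0 = u+ξ. Define v²(i) = (u0(4i-3)+u0(4i-2)+u0(4i-1)+u0(4i))/4 and u²(i) analogously from u, for i=1,...,N/4, and V₃ = (1/(4h)) Σ_{i=1}^{N/4-1} (v²(i+1)-v²(i))². Then E[V₃] = (1/16 - 1/(4N))(σ²/h²) + (1/(4h)) Σ_{i=1}^{N/4-1} (u²(i+1)-u²(i))². -/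
/-!
The increment `v₂ (i+1) - v₂ i` is the deterministic increment `u₂ (i+1) - u₂ i` plus the centred
noise `(ξ (4i+4) + ⋯ + ξ (4i+7) - ξ (4i) - ⋯ - ξ (4i+3)) / 4`. The cross term has mean zero and,
by independence, the noise has second moment `8 · (1/16) · 2σ²/(Nh) = σ²/(Nh)`. Summing over the
`N/4 - 1` increments and multiplying by `1/(4h)` gives `(1/16 - 1/(4N)) σ²/h²`.
-/

open Finset MeasureTheory ProbabilityTheory

section SecondMoments

variable {Ω ι : Type*} {mΩ : MeasurableSpace Ω} {μ : Measure Ω}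

lemma integral_const_add_sq [IsProbabilityMeasure μ] {X : Ω → ℝ} (hX : MemLp X 2 μ)
    (hmean : μ[X] = 0) (c : ℝ) :
    ∫ ω, (c + X ω) ^ 2 ∂μ = c ^ 2 + ∫ ω, X ω ^ 2 ∂μ := by
  have hX1 : Integrable X μ := hX.integrable one_le_two
  have hexpand : ∀ ω, (c + X ω) ^ 2 = (c ^ 2 + 2 * c * X ω) + X ω ^ 2 := fun ω => by ring
  simp_rw [hexpand]
  rw [integral_add (f := fun ω => c ^ 2 + 2 * c * X ω)
      ((integrable_const _).add (hX1.const_mul _)) hX.integrable_sq,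
    integral_add (integrable_const _) (hX1.const_mul _), integral_const_mul, hmean]
  simp

lemma memLp_sum_mul {ξ : ι → Ω → ℝ} {s : Finset ι} (hL2 : ∀ i ∈ s, MemLp (ξ i) 2 μ)
    (a : ι → ℝ) : MemLp (fun ω => ∑ i ∈ s, a i * ξ i ω) 2 μ :=
  memLp_finsetSum s fun i hi => (hL2 i hi).const_mul (a i)

lemma integral_sum_mul_eq_zero {ξ : ι → Ω → ℝ} {s : Finset ι}
    (hint : ∀ i ∈ s, Integrable (ξ i) μ) (hmean : ∀ i ∈ s, μ[ξ i] = 0) (a : ι → ℝ) :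
    ∫ ω, ∑ i ∈ s, a i * ξ i ω ∂μ = 0 := by
  rw [integral_finsetSum s fun i hi => (hint i hi).const_mul (a i)]
  exact sum_eq_zero fun i hi => by rw [integral_const_mul, hmean i hi, mul_zero]

lemma integral_sum_mul_sq_of_pairwise_indepFun [IsFiniteMeasure μ] {ξ : ι → Ω → ℝ}
    {s : Finset ι} (hindep : Set.Pairwise s fun i j => ξ i ⟂ᵢ[μ] ξ j)
    (hL2 : ∀ i ∈ s, MemLp (ξ i) 2 μ) (hmean : ∀ i ∈ s, μ[ξ i] = 0) (a : ι → ℝ) :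
    ∫ ω, (∑ i ∈ s, a i * ξ i ω) ^ 2 ∂μ = ∑ i ∈ s, a i ^ 2 * ∫ ω, ξ i ω ^ 2 ∂μ := by
  have hsum : (fun ω => ∑ i ∈ s, a i * ξ i ω) = ∑ i ∈ s, a i • ξ i := by
    ext ω; simp
  have hvar : Var[∑ i ∈ s, a i • ξ i; μ] = ∑ i ∈ s, a i ^ 2 * Var[ξ i; μ] := by
    rw [IndepFun.variance_sum (fun i hi => (hL2 i hi).const_smul (a i))
      fun i hi j hj hij => (hindep hi hj hij).comp (measurable_const_smul (a i))
        (measurable_const_smul (a j))]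
    exact sum_congr rfl fun i _ => variance_smul _ _ _
  rw [← variance_of_integral_eq_zero (memLp_sum_mul hL2 a).aemeasurable
    (integral_sum_mul_eq_zero (fun i hi => (hL2 i hi).integrable one_le_two) hmean a), hsum, hvar]
  exact sum_congr rfl fun i hi => by
    rw [variance_of_integral_eq_zero (hL2 i hi).aemeasurable (hmean i hi)]

end SecondMoments

/-- Here `N = 4*M`, and indices are 0-based, so `u₂ i` averages `u (4i), …, u (4i+3)`. -/
theorem expected_V3_general (M : ℕ) (hM : 1 ≤ M) (h σ : ℝ)
    {Ω : Type*} [MeasureSpace Ω] [IsProbabilityMeasure (ℙ : Measure Ω)]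
    (ξ : ℕ → Ω → ℝ)
    (hindep : iIndepFun ξ ℙ)
    (hL2 : ∀ i, MemLp (ξ i) 2 ℙ)
    (hmean : ∀ i, ∫ ω, ξ i ω = 0)
    (hvar : ∀ i, ∫ ω, (ξ i ω)^2 = 2*σ^2/((4*M : ℕ)*h))
    (u : ℕ → ℝ) (u0 : ℕ → Ω → ℝ)
    (hu0 : ∀ i ω, u0 i ω = u i + ξ i ω)
    (u₂ : ℕ → ℝ) (v₂ : ℕ → Ω → ℝ)
    (hu2 : ∀ i, u₂ i = (u (4*i) + u (4*i+1) + u (4*i+2) + u (4*i+3))/4)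
    (hv2 : ∀ i ω, v₂ i ω = (u0 (4*i) ω + u0 (4*i+1) ω + u0 (4*i+2) ω + u0 (4*i+3) ω)/4)
    (V₃ : Ω → ℝ)
    (hV3 : ∀ ω, V₃ ω = (1/(4*h)) * ∑ i ∈ range (M-1), (v₂ (i+1) ω - v₂ i ω)^2) :
    ∫ ω, V₃ ω
      = (1/16 - 1/(4*(4*M : ℕ))) * (σ^2/h^2)
        + (1/(4*h)) * ∑ i ∈ range (M-1), (u₂ (i+1) - u₂ i)^2 := by
  let c : ℕ → ℝ := fun j => if j < 4 then -(1 / 4) else 1 / 4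
  have hincr : ∀ i ω, v₂ (i + 1) ω - v₂ i ω
      = (u₂ (i + 1) - u₂ i) + ∑ j ∈ range 8, c j * ξ (4 * i + j) ω := fun i ω => by
    simp only [hv2, hu2, hu0, sum_range_succ, sum_range_zero, c]
    norm_num [mul_add]
    ring
  have hnoise_L2 (i : ℕ) : MemLp (fun ω => ∑ j ∈ range 8, c j * ξ (4 * i + j) ω) 2 ℙ :=
    memLp_sum_mul (fun j _ => hL2 _) c
  have hincr_L2 (i : ℕ) : MemLp (fun ω => v₂ (i + 1) ω - v₂ i ω) 2 ℙ := by
    simp_rw [hincr i]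
    exact (memLp_const (u₂ (i + 1) - u₂ i)).add (hnoise_L2 i)
  have hincr_sq (i : ℕ) :
      ∫ ω, (v₂ (i + 1) ω - v₂ i ω) ^ 2 = (u₂ (i + 1) - u₂ i) ^ 2 + σ ^ 2 / (4 * M * h) := by
    simp_rw [hincr i]
    rw [integral_const_add_sq (hnoise_L2 i) (integral_sum_mul_eq_zero
        (fun j _ => (hL2 _).integrable one_le_two) (fun j _ => hmean _) c),
      integral_sum_mul_sq_of_pairwise_indepFun (fun j _ k _ hjk => hindep.indepFun (by omega))
        (fun j _ => hL2 _) (fun j _ => hmean _) c]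
    simp only [hvar, sum_range_succ, sum_range_zero, c]
    norm_num
    ring
  simp_rw [hV3]
  rw [integral_const_mul, integral_finsetSum _ fun i _ => (hincr_L2 i).integrable_sq]
  simp only [hincr_sq, sum_add_distrib, sum_const, card_range, nsmul_eq_mul]
  have hMinv : (M : ℝ) * (M : ℝ)⁻¹ = 1 := mul_inv_cancel₀ (Nat.cast_ne_zero.mpr (by omega))
  push_cast [Nat.cast_sub hM]
  linear_combination σ ^ 2 / (16 * h ^ 2) * hMinv

/-- Expectation of the twice-coarsened variation `V₃`. Here `N = 4*M`,
indices are 0-based so `u² i` averages `u (4i), …, u (4i+3)`. -/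
theorem expected_V3 (M : ℕ) (hM : 1 ≤ M) (h σ : ℝ) (hh : 0 < h)
    {Ω : Type*} [MeasureSpace Ω] [IsProbabilityMeasure (ℙ : Measure Ω)]
    (ξ : ℕ → Ω → ℝ)
    (hindep : iIndepFun ξ ℙ)
    (hL2 : ∀ i, MemLp (ξ i) 2 ℙ)
    (hmean : ∀ i, ∫ ω, ξ i ω = 0)
    (hvar : ∀ i, ∫ ω, (ξ i ω)^2 = 2*σ^2/((4*M : ℕ)*h))
    (u : ℕ → ℝ) (u0 : ℕ → Ω → ℝ)
    (hu0 : ∀ i ω, u0 i ω = u i + ξ i ω)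
    (u₂ : ℕ → ℝ) (v₂ : ℕ → Ω → ℝ)
    (hu2 : ∀ i, u₂ i = (u (4*i) + u (4*i+1) + u (4*i+2) + u (4*i+3))/4)
    (hv2 : ∀ i ω, v₂ i ω = (u0 (4*i) ω + u0 (4*i+1) ω + u0 (4*i+2) ω + u0 (4*i+3) ω)/4)
    (V₃ : Ω → ℝ)
    (hV3 : ∀ ω, V₃ ω = (1/(4*h)) * ∑ i ∈ range (M-1), (v₂ (i+1) ω - v₂ i ω)^2) :
    ∫ ω, V₃ ω
      = (1/16 - 1/(4*(4*M : ℕ))) * (σ^2/h^2)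
        + (1/(4*h)) * ∑ i ∈ range (M-1), (u₂ (i+1) - u₂ i)^2 :=
  expected_V3_general M hM h σ ξ hindep hL2 hmean hvar u u0 hu0 u₂ v₂ hu2 hv2 V₃ hV3
end
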